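/- For the embedding e: λJms → λJmse, substitution commutes up to π-reduction: for all terms t, u of λJms, [e(t)/x]e(u) →*π e([t/x]u), and analogously for co-terms: [e(t)/x]e(l) →*π e([t/x]l). Moreover, (y)e(t)[] →*π e((y)t) for any term t. -/

import Mathlib

-- Terms, co-terms and commands of the λJmse-calculus.
mutual
inductive Tm : Type
  | var : ℕ → Tm
  | lam : ℕ → Tm → Tm
  | coe : Cmd → Tm
  deriving DecidableEq
inductive Co : Type
  | nil : Co
  | cons : Tm → Co → Co
  | sel : ℕ → Cmd → Co
  deriving DecidableEq
inductive Cmd : Type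
  | cut : Tm → Co → Cmd
  deriving DecidableEq
end

-- Capture-avoiding (structural) substitution.
mutual
def substTm (t : Tm) (x : ℕ) : Tm → Tm
  | .var y => if x = y then t else .var y
  | .lam y u => .lam y (substTm t x u)
  | .coe c => .coe (substCmd t x c)
def substCo (t : Tm) (x : ℕ) : Co → Co
  | .nil => .nil
  | .cons u l => .cons (substTm t x u) (substCo t x l)
  | .sel y c => .sel y (substCmd t x c)
def substCmd (t : Tm) (x : ℕ) : Cmd → Cmd
  | .cut u l => .cut (substTm t x u) (substCo t x l)
end

-- Free variables.
mutual
def freeTm : Tm → Finset ℕ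
  | .var x => {x}
  | .lam x t => freeTm t \ {x}
  | .coe c => freeCmd c
def freeCo : Co → Finset ℕ
  | .nil => ∅
  | .cons u l => freeTm u ∪ freeCo l
  | .sel x c => freeCmd c \ {x}
def freeCmd : Cmd → Finset ℕ
  | .cut t l => freeTm t ∪ freeCo l
end

/-- Eager append of co-terms. -/
def appendCo : Co → Co → Co
  | .nil, l' => l'
  | .cons u l, l' => .cons u (appendCo l l')
  | .sel x (.cut t l), l' => .sel x (.cut t (appendCo l l'))

/-- Evaluation contexts: co-terms of the form `[]` or `u::l`. -/
def IsE : Co → Prop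
  | .nil => True
  | .cons _ _ => True
  | .sel _ _ => False

-- One-step reduction of λJmse.
mutual
inductive StepTm : Tm → Tm → Prop
  | eps (t : Tm) : StepTm (.coe (.cut t .nil)) t
  | lam {t t' : Tm} (x : ℕ) : StepTm t t' → StepTm (.lam x t) (.lam x t')
  | coe {c c' : Cmd} : StepCmd c c' → StepTm (.coe c) (.coe c')
inductive StepCo : Co → Co → Prop
  | mu {x : ℕ} {l : Co} : x ∉ freeCo l →
      StepCo (.sel x (.cut (.var x) l)) l
  | consL {u u' : Tm} (l : Co) : StepTm u u' → StepCo (.cons u l) (.cons u' l)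
  | consR {l l' : Co} (u : Tm) : StepCo l l' → StepCo (.cons u l) (.cons u l')
  | sel {c c' : Cmd} (x : ℕ) : StepCmd c c' → StepCo (.sel x c) (.sel x c')
inductive StepCmd : Cmd → Cmd → Prop
  | beta (x : ℕ) (t u : Tm) (l : Co) :
      StepCmd (.cut (.lam x t) (.cons u l)) (.cut u (.sel x (.cut t l)))
  | pi (t : Tm) (l E : Co) : IsE E →
      StepCmd (.cut (.coe (.cut t l)) E) (.cut t (appendCo l E))
  | sigma (t : Tm) (x : ℕ) (c : Cmd) :
      StepCmd (.cut t (.sel x c)) (substCmd t x c)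
  | cutL {t t' : Tm} (l : Co) : StepTm t t' → StepCmd (.cut t l) (.cut t' l)
  | cutR {l l' : Co} (t : Tm) : StepCo l l' → StepCmd (.cut t l) (.cut t l')
end

-- The λJms-calculus.
mutual
inductive MTm : Type
  | var : ℕ → MTm
  | lam : ℕ → MTm → MTm
  | app : MTm → MCo → MTm
  deriving DecidableEq
inductive MCo : Type
  | cons : MTm → MCo → MCo
  | sel : ℕ → MTm → MCo
  deriving DecidableEq
end

def MTm.IsValue : MTm → Prop
  | .var _ => True
  | .lam _ _ => True
  | .app _ _ => False

mutual
def msubstTm (t : MTm) (x : ℕ) : MTm → MTm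
  | .var y => if x = y then t else .var y
  | .lam y u => .lam y (msubstTm t x u)
  | .app u l => .app (msubstTm t x u) (msubstCo t x l)
def msubstCo (t : MTm) (x : ℕ) : MCo → MCo
  | .cons u l => .cons (msubstTm t x u) (msubstCo t x l)
  | .sel y v => .sel y (msubstTm t x v)
end

mutual
def mfreeTm : MTm → Finset ℕ
  | .var x => {x}
  | .lam x t => mfreeTm t \ {x}
  | .app t l => mfreeTm t ∪ mfreeCo l
def mfreeCo : MCo → Finset ℕ
  | .cons u l => mfreeTm u ∪ mfreeCo l
  | .sel x v => mfreeTm v \ {x}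
end

-- Eager append of λJms co-terms.
def mappend : MCo → MCo → MCo
  | .cons u l, l' => .cons u (mappend l l')
  | .sel x (.var y), l' => .sel x (.app (.var y) l')
  | .sel x (.lam y t), l' => .sel x (.app (.lam y t) l')
  | .sel x (.app t l), l' => .sel x (.app t (mappend l l'))

-- One-step reduction of λJms.
mutual
inductive MStepTm : MTm → MTm → Prop
  | beta (x : ℕ) (t u : MTm) (l : MCo) :
      MStepTm (.app (.lam x t) (.cons u l)) (.app u (.sel x (.app t l)))
  | pi (t : MTm) (l : MCo) (u : MTm) (l' : MCo) :
      MStepTm (.app (.app t l) (.cons u l')) (.app t (mappend l (.cons u l')))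
  | sigma (t : MTm) (x : ℕ) (v : MTm) :
      MStepTm (.app t (.sel x v)) (msubstTm t x v)
  | lam {t t' : MTm} (x : ℕ) : MStepTm t t' → MStepTm (.lam x t) (.lam x t')
  | appL {t t' : MTm} (l : MCo) : MStepTm t t' → MStepTm (.app t l) (.app t' l)
  | appR {l l' : MCo} (t : MTm) : MStepCo l l' → MStepTm (.app t l) (.app t l')
inductive MStepCo : MCo → MCo → Prop
  | mu {x : ℕ} {l : MCo} : x ∉ mfreeCo l → MStepCo (.sel x (.app (.var x) l)) l
  | consL {u u' : MTm} (l : MCo) : MStepTm u u' → MStepCo (.cons u l) (.cons u' l)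
  | consR {l l' : MCo} (u : MTm) : MStepCo l l' → MStepCo (.cons u l) (.cons u l')
  | sel {v v' : MTm} (x : ℕ) : MStepTm v v' → MStepCo (.sel x v) (.sel x v')
end

-- The embedding e : λJms → λJmse.
mutual
def eTm : MTm → Tm
  | .var x => .var x
  | .lam x t => .lam x (eTm t)
  | .app t l => .coe (.cut (eTm t) (eCo l))
def eCo : MCo → Co
  | .cons u l => .cons (eTm u) (eCo l)
  | .sel x (.var y) => .sel x (.cut (.var y) .nil)
  | .sel x (.lam y t) => .sel x (.cut (.lam y (eTm t)) .nil)
  | .sel x (.app t l) => .sel x (.cut (eTm t) (eCo l))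
end

-- π-reduction only, closed under all contexts.
mutual
inductive PStepTm : Tm → Tm → Prop
  | lam {t t' : Tm} (x : ℕ) : PStepTm t t' → PStepTm (.lam x t) (.lam x t')
  | coe {c c' : Cmd} : PStepCmd c c' → PStepTm (.coe c) (.coe c')
inductive PStepCo : Co → Co → Prop
  | consL {u u' : Tm} (l : Co) : PStepTm u u' → PStepCo (.cons u l) (.cons u' l)
  | consR {l l' : Co} (u : Tm) : PStepCo l l' → PStepCo (.cons u l) (.cons u l')
  | sel {c c' : Cmd} (x : ℕ) : PStepCmd c c' → PStepCo (.sel x c) (.sel x c')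
inductive PStepCmd : Cmd → Cmd → Prop
  | pi (t : Tm) (l E : Co) : IsE E →
      PStepCmd (.cut (.coe (.cut t l)) E) (.cut t (appendCo l E))
  | cutL {t t' : Tm} (l : Co) : PStepTm t t' → PStepCmd (.cut t l) (.cut t' l)
  | cutR {l l' : Co} (t : Tm) : PStepCo l l' → PStepCmd (.cut t l) (.cut t l')
end

/-!
Substitution commutes with `e` clause by clause, except where the variable being replaced
stands alone in a co-term `(y)x[]` and the substituted term is an application `u l`:
then `[e(u l)/x]((y)x[]) = (y){e(u) e(l)}[]`, while `e((y)(u l)) = (y)e(u) e(l)`,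
and one π-step with `E = []` bridges the gap, since appending `[]` is the identity.
-/

open Relation

theorem appendCo_nil : ∀ l : Co, appendCo l .nil = l
  | .nil => rfl
  | .cons u l => by rw [appendCo, appendCo_nil l]
  | .sel x (.cut t l) => by rw [appendCo, appendCo_nil l]

theorem PStepCmd.pi_nil (t : Tm) (l : Co) : PStepCmd (.cut (.coe (.cut t l)) .nil) (.cut t l) := by
  simpa only [appendCo_nil] using PStepCmd.pi t l .nil trivial

section Congruence

variable {t t' u u' : Tm} {l l' : Co} {c c' : Cmd}

theorem reflTransGen_pi_lam (x : ℕ) (h : ReflTransGen PStepTm t t') :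
    ReflTransGen PStepTm (.lam x t) (.lam x t') :=
  h.lift (Tm.lam x) fun _ _ => PStepTm.lam x

theorem reflTransGen_pi_coe (h : ReflTransGen PStepCmd c c') :
    ReflTransGen PStepTm (.coe c) (.coe c') :=
  h.lift Tm.coe fun _ _ => PStepTm.coe

theorem reflTransGen_pi_sel (x : ℕ) (h : ReflTransGen PStepCmd c c') :
    ReflTransGen PStepCo (.sel x c) (.sel x c') :=
  h.lift (Co.sel x) fun _ _ => PStepCo.sel x

theorem reflTransGen_pi_cons (hu : ReflTransGen PStepTm u u') (hl : ReflTransGen PStepCo l l') :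
    ReflTransGen PStepCo (.cons u l) (.cons u' l') :=
  (hu.lift (Co.cons · l) fun _ _ => PStepCo.consL l).trans
    (hl.lift (Co.cons u') fun _ _ => PStepCo.consR u')

theorem reflTransGen_pi_cut (ht : ReflTransGen PStepTm t t') (hl : ReflTransGen PStepCo l l') :
    ReflTransGen PStepCmd (.cut t l) (.cut t' l') :=
  (ht.lift (Cmd.cut · l) fun _ _ => PStepCmd.cutL l).trans
    (hl.lift (Cmd.cut t') fun _ _ => PStepCmd.cutR t')

end Congruence

theorem reflTransGen_pi_sel_cut_nil_eCo (y : ℕ) :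
    ∀ t : MTm, ReflTransGen PStepCo (.sel y (.cut (eTm t) .nil)) (eCo (.sel y t))
  | .var _ | .lam _ _ => .refl
  | .app u l => .single (.sel y (.pi_nil (eTm u) (eCo l)))

mutual

theorem reflTransGen_pi_substTm_eTm (t : MTm) (x : ℕ) : ∀ u : MTm,
    ReflTransGen PStepTm (substTm (eTm t) x (eTm u)) (eTm (msubstTm t x u))
  | .var y => by
      simp only [eTm, substTm, msubstTm]
      split <;> exact .refl
  | .lam y u => reflTransGen_pi_lam y (reflTransGen_pi_substTm_eTm t x u)
  | .app u l => reflTransGen_pi_coe <|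
      reflTransGen_pi_cut (reflTransGen_pi_substTm_eTm t x u) (reflTransGen_pi_substCo_eCo t x l)

theorem reflTransGen_pi_substCo_eCo (t : MTm) (x : ℕ) : ∀ l : MCo,
    ReflTransGen PStepCo (substCo (eTm t) x (eCo l)) (eCo (msubstCo t x l))
  | .cons u l =>
      reflTransGen_pi_cons (reflTransGen_pi_substTm_eTm t x u) (reflTransGen_pi_substCo_eCo t x l)
  | .sel y (.var z) => by
      simp only [eCo, substCo, substCmd, substTm, msubstCo, msubstTm]
      split
      · exact reflTransGen_pi_sel_cut_nil_eCo y t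
      · exact .refl
  | .sel y (.lam z u) => reflTransGen_pi_sel y <|
      reflTransGen_pi_cut (reflTransGen_pi_lam z (reflTransGen_pi_substTm_eTm t x u)) .refl
  | .sel y (.app u l) => reflTransGen_pi_sel y <|
      reflTransGen_pi_cut (reflTransGen_pi_substTm_eTm t x u) (reflTransGen_pi_substCo_eCo t x l)

end

theorem e_subst_commutes_up_to_pi :
    (∀ (t u : MTm) (x : ℕ),
      Relation.ReflTransGen PStepTm (substTm (eTm t) x (eTm u)) (eTm (msubstTm t x u))) ∧
    (∀ (t : MTm) (l : MCo) (x : ℕ),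
      Relation.ReflTransGen PStepCo (substCo (eTm t) x (eCo l)) (eCo (msubstCo t x l))) ∧
    (∀ (t : MTm) (y : ℕ),
      Relation.ReflTransGen PStepCo (Co.sel y (.cut (eTm t) .nil)) (eCo (.sel y t))) :=
  ⟨fun t u x => reflTransGen_pi_substTm_eTm t x u, fun t l x => reflTransGen_pi_substCo_eCo t x l,
    fun t y => reflTransGen_pi_sel_cut_nil_eCo y t⟩
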